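/- arXiv:2405.05865 — 6 statements merged into one kernel-verified Lean document; each statement's English description precedes it below -/
import Mathlib

section
/- Let A be an n×n positive semidefinite matrix with eigenvalues λ₁ ≥ λ₂ ≥ ... ≥ λₙ ≥ 0, and for λ > 0 define the effective dimension d_λ = ∑ᵢ λᵢ/(λᵢ+λ). Then for any γ > 0 and any index j with j ≥ (1+γ⁻¹)·d_λ, we have λⱼ ≤ γλ. -/
/-!
The map `x ↦ x / (x + μ)` is increasing, so the terms `λᵢ / (λᵢ + μ)` of `d_λ` are
non-increasing; hence the first `j + 1` of them, each at least the `j`-th, give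
`(j + 1) · λⱼ / (λⱼ + μ) ≤ d_λ`. If `λⱼ > γμ`, that term exceeds `γ / (γ + 1)`, forcing
`(1 + γ⁻¹) d_λ > j + 1`.
-/

open Finset

theorem Antitone.succ_nsmul_le_sum {M : Type*} [AddCommMonoid M] [PartialOrder M]
    [IsOrderedAddMonoid M] {n : ℕ} {g : Fin n → M} (hg : Antitone g) (hg0 : 0 ≤ g)
    (j : Fin n) : ((j : ℕ) + 1) • g j ≤ ∑ i, g i :=
  calc ((j : ℕ) + 1) • g j = ∑ _i ∈ Iic j, g j := by rw [sum_const, Fin.card_Iic]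
    _ ≤ ∑ i ∈ Iic j, g i := sum_le_sum fun i hi => hg (mem_Iic.mp hi)
    _ ≤ ∑ i, g i := sum_le_sum_of_subset_of_nonneg (subset_univ _) fun i _ _ => hg0 i

theorem strictMonoOn_div_add_const {μ : ℝ} (hμ : 0 < μ) :
    StrictMonoOn (fun x : ℝ => x / (x + μ)) (Set.Ici 0) := by
  intro x hx y hy hxy
  have hx' : 0 < x + μ := by linarith [Set.mem_Ici.mp hx]
  have hy' : 0 < y + μ := by linarith [Set.mem_Ici.mp hy]
  rw [div_lt_div_iff₀ hx' hy']
  nlinarith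

/-- Lemma 5.4(1) of Frangella et al..
Let `lam 0 ≥ lam 1 ≥ ... ≥ lam (n-1) ≥ 0` be the eigenvalues of an `n × n` PSD matrix
(listed in non-increasing order, here as an antitone nonnegative sequence), let `μ > 0`, and
let `d = ∑ i, lam i / (lam i + μ)` be the effective dimension.  Then for any `γ > 0` and any
(1-based) index `j` with `j ≥ (1 + γ⁻¹) * d`, we have `lam j ≤ γ * μ`. -/
theorem effective_dimension_eigenvalue_bound
    (n : ℕ) (lam : Fin n → ℝ) (hmono : Antitone lam) (hnn : ∀ i, 0 ≤ lam i)
    (μ : ℝ) (hμ : 0 < μ)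
    (d : ℝ) (hd : d = ∑ i, lam i / (lam i + μ))
    (γ : ℝ) (hγ : 0 < γ)
    (j : Fin n) (hj : (1 + γ⁻¹) * d ≤ (j : ℕ) + 1) :
    lam j ≤ γ * μ := by
  by_contra! hlarge
  set g : Fin n → ℝ := fun i => lam i / (lam i + μ)
  have hf := strictMonoOn_div_add_const hμ
  have hg : Antitone g := fun a b hab =>
    hf.monotoneOn (Set.mem_Ici.mpr (hnn b)) (Set.mem_Ici.mpr (hnn a)) (hmono hab)
  have hg0 : 0 ≤ g := fun i => div_nonneg (hnn i) (by linarith [hnn i])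
  have hcount : ((j : ℕ) + 1) * g j ≤ d := by
    simpa only [hd, nsmul_eq_mul, Nat.cast_add, Nat.cast_one] using hg.succ_nsmul_le_sum hg0 j
  have hthreshold : γ / (γ + 1) < g j := by
    have h : γ * μ / (γ * μ + μ) < g j :=
      hf (Set.mem_Ici.mpr (by positivity)) (Set.mem_Ici.mpr (hnn j)) hlarge
    rwa [show γ * μ / (γ * μ + μ) = γ / (γ + 1) by field_simp] at h
  have hscale : (1 + γ⁻¹) * (γ / (γ + 1)) = 1 := by field_simp
  have : ((j : ℕ) + 1 : ℝ) < (j : ℕ) + 1 :=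
    calc ((j : ℕ) + 1 : ℝ) = (1 + γ⁻¹) * (((j : ℕ) + 1) * (γ / (γ + 1))) := by
          rw [mul_left_comm, hscale, mul_one]
      _ < (1 + γ⁻¹) * (((j : ℕ) + 1) * g j) := by gcongr
      _ ≤ (1 + γ⁻¹) * d := by gcongr
      _ ≤ (j : ℕ) + 1 := hj
  exact lt_irrefl _ this
end

section
/- Let A be an n×n positive semidefinite matrix with eigenvalues λ₁ ≥ ... ≥ λₙ ≥ 0 and let λ > 0 with effective dimension d_λ = ∑ᵢ λᵢ/(λᵢ+λ). If k ≥ d_λ, then ∑_{i>k} λᵢ ≤ λ·d_λ. -/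
open Finset

/-- Lemma 5.4(2) of Frangella et al..
Let `lam 0 ≥ ... ≥ lam (n-1) ≥ 0` be the eigenvalues of an `n × n` PSD matrix (as an antitone
nonnegative sequence), `μ > 0`, and `d = ∑ i, lam i / (lam i + μ)` the effective dimension.
If `k ≥ d`, then the tail sum `∑_{i > k}  lam i` (1-based indices `> k`, i.e. 0-based `≥ k`)
is at most `μ * d`. -/
theorem effective_dimension_tail_bound
    (n : ℕ) (lam : Fin n → ℝ) (hmono : Antitone lam) (hnn : ∀ i, 0 ≤ lam i)
    (μ : ℝ) (hμ : 0 < μ)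
    (d : ℝ) (hd : d = ∑ i, lam i / (lam i + μ))
    (k : ℕ) (hk : d ≤ (k : ℝ)) :
    ∑ i ∈ univ.filter (fun i : Fin n => k ≤ (i : ℕ)), lam i ≤ μ * d := by
  set r : Fin n → ℝ := fun i => lam i / (lam i + μ) with hr
  have hpos : ∀ i, 0 < lam i + μ := fun i => by have := hnn i; linarith
  have hrnn : ∀ i, 0 ≤ r i := fun i => div_nonneg (hnn i) (hpos i).le
  have hdnn : 0 ≤ d := by
    rw [hd]; exact Finset.sum_nonneg fun i _ => hrnn i
  have hident : ∀ i, lam i = (μ + lam i) * r i := fun i => by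
    field_simp [hr, (hpos i).ne']
    simp only [hr]
    field_simp
    rw [add_comm μ, mul_div_assoc, div_self (hpos i).ne', mul_one]
  by_cases hkn : k < n
  · set κ : Fin n := ⟨k, hkn⟩ with hκ
    have hrmono : ∀ i j : Fin n, i ≤ j → r j ≤ r i := by
      intro i j hij
      have h1 := hmono hij
      have := hnn j
      rw [hr]
      rw [div_le_div_iff₀ (hpos j) (hpos i)]
      nlinarith
    -- split d
    have hsplit : (∑ i ∈ univ.filter (fun i : Fin n => k ≤ (i : ℕ)), r i)
        + (∑ i ∈ univ.filter (fun i : Fin n => ¬ k ≤ (i : ℕ)), r i) = d := by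
      rw [hd, Finset.sum_filter_add_sum_filter_not]
    -- head lower bound
    have hhead : (k : ℝ) * r κ ≤ ∑ i ∈ univ.filter (fun i : Fin n => ¬ k ≤ (i : ℕ)), r i := by
      have hcard : (univ.filter (fun i : Fin n => ¬ k ≤ (i : ℕ))).card = k := by
        have : (univ.filter (fun i : Fin n => ¬ k ≤ (i : ℕ))) = Finset.Iio κ := by
          ext i
          simp only [Finset.mem_filter, Finset.mem_univ, true_and, Finset.mem_Iio, Fin.lt_def]
          exact Nat.not_le
        rw [this, Fin.card_Iio]
      calc (k : ℝ) * r κ = ∑ _i ∈ univ.filter (fun i : Fin n => ¬ k ≤ (i : ℕ)), r κ := by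
            rw [Finset.sum_const, hcard, nsmul_eq_mul]
        _ ≤ _ := Finset.sum_le_sum fun i hi => by
            apply hrmono
            simp only [Finset.mem_filter, Nat.not_le] at hi
            exact le_of_lt (by simpa [Fin.lt_def, hκ] using hi.2)
    have htail_r : ∑ i ∈ univ.filter (fun i : Fin n => k ≤ (i : ℕ)), r i ≤ d - (k : ℝ) * r κ := by
      linarith
    have htail_r_nn : 0 ≤ ∑ i ∈ univ.filter (fun i : Fin n => k ≤ (i : ℕ)), r i :=
      Finset.sum_nonneg fun i _ => hrnn i
    have hstep : ∑ i ∈ univ.filter (fun i : Fin n => k ≤ (i : ℕ)), lam i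
        ≤ (μ + lam κ) * ∑ i ∈ univ.filter (fun i : Fin n => k ≤ (i : ℕ)), r i := by
      rw [Finset.mul_sum]
      apply Finset.sum_le_sum
      intro i hi
      simp only [Finset.mem_filter] at hi
      have hle : lam i ≤ lam κ := hmono (by simpa [Fin.le_def, hκ] using hi.2)
      rw [hident i]
      exact mul_le_mul_of_nonneg_right (by linarith) (hrnn i)
    have hκnn := hnn κ
    have hfin : (μ + lam κ) * (d - (k : ℝ) * r κ) ≤ μ * d := by
      have : (μ + lam κ) * r κ = lam κ := (hident κ).symm
      nlinarith
    calc ∑ i ∈ univ.filter (fun i : Fin n => k ≤ (i : ℕ)), lam i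
        ≤ (μ + lam κ) * ∑ i ∈ univ.filter (fun i : Fin n => k ≤ (i : ℕ)), r i := hstep
      _ ≤ (μ + lam κ) * (d - (k : ℝ) * r κ) :=
          mul_le_mul_of_nonneg_left htail_r (by linarith)
      _ ≤ μ * d := hfin
  · have hempty : univ.filter (fun i : Fin n => k ≤ (i : ℕ)) = ∅ := by
      ext i
      simp only [Finset.mem_filter, Finset.mem_univ, true_and, Finset.notMem_empty, iff_false]
      have := i.isLt; omega
    rw [hempty, Finset.sum_empty]
    positivity
end

section
/- Let A be an n×n positive semidefinite matrix, S an s×n matrix such that W := S A Sᵀ is invertible, and let Â = A Sᵀ W⁻¹ S A be the Nyström approximation of A. Then Â ⪯ A in the Loewner order. -/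
open Matrix

/-- For `A` an `n × n` PSD matrix and `S : s × n` with `W = S A Sᵀ`
invertible, the Nyström approximation `Â = A Sᵀ W⁻¹ S A` satisfies `Â ⪯ A` in the Loewner
order, i.e. `A − Â` is positive semidefinite. -/
theorem nystrom_approximation_loewner_le
    (n s : ℕ) (A : Matrix (Fin n) (Fin n) ℝ) (hA : A.PosSemidef)
    (S : Matrix (Fin s) (Fin n) ℝ) (hW : IsUnit (S * A * Sᵀ)) :
    (A - A * Sᵀ * (S * A * Sᵀ)⁻¹ * S * A).PosSemidef := by
  open scoped MatrixOrder in set B := CFC.sqrt A with hBdef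
  have hBsym : Bᵀ = B := by
    have : Bᴴ = B := (open scoped MatrixOrder in (CFC.sqrt_nonneg A).posSemidef.1)
    simpa [Matrix.conjTranspose_eq_transpose_of_trivial] using this
  have hBB : B * B = A := open scoped MatrixOrder in CFC.sqrt_mul_sqrt_self A hA.nonneg
  set W : Matrix (Fin s) (Fin s) ℝ := S * A * Sᵀ with hWdef
  have hWM : W = (B * Sᵀ)ᵀ * (B * Sᵀ) := by
    rw [Matrix.transpose_mul, Matrix.transpose_transpose, hBsym]
    rw [hWdef, ← hBB]; simp only [Matrix.mul_assoc]
  have hdet : IsUnit W.det := (Matrix.isUnit_iff_isUnit_det W).mp hW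
  have hinv : W⁻¹ * W = 1 := Matrix.nonsing_inv_mul W hdet
  have hWsym : Wᵀ = W := by
    rw [hWdef, ← hBB]
    simp [Matrix.transpose_mul, hBsym, Matrix.mul_assoc]
  have hWinvsym : (W⁻¹)ᵀ = W⁻¹ := by
    rw [Matrix.transpose_nonsing_inv, hWsym]
  set P : Matrix (Fin n) (Fin n) ℝ := (B * Sᵀ) * W⁻¹ * (B * Sᵀ)ᵀ with hPdef
  have hPsym : Pᵀ = P := by
    rw [hPdef]
    simp [Matrix.transpose_mul, hWinvsym, Matrix.mul_assoc]
  have hPidem : P * P = P := by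
    rw [hPdef]
    calc (B * Sᵀ) * W⁻¹ * (B * Sᵀ)ᵀ * ((B * Sᵀ) * W⁻¹ * (B * Sᵀ)ᵀ)
        = (B * Sᵀ) * W⁻¹ * ((B * Sᵀ)ᵀ * (B * Sᵀ)) * (W⁻¹ * (B * Sᵀ)ᵀ) := by
          simp only [Matrix.mul_assoc]
      _ = (B * Sᵀ) * (W⁻¹ * W * (W⁻¹ * (B * Sᵀ)ᵀ)) := by
          rw [← hWM]; simp only [Matrix.mul_assoc]
      _ = (B * Sᵀ) * W⁻¹ * (B * Sᵀ)ᵀ := by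
          rw [hinv]; simp [Matrix.mul_assoc]
  have key : A - A * Sᵀ * W⁻¹ * S * A = ((1 - P) * B)ᴴ * ((1 - P) * B) := by
    have hQ : (1 - P)ᵀ * (1 - P) = 1 - P := by
      rw [Matrix.transpose_sub, Matrix.transpose_one, hPsym]
      rw [Matrix.sub_mul, Matrix.mul_sub, Matrix.mul_sub, hPidem]
      simp
    have hH : ((1 - P) * B)ᴴ = ((1 - P) * B)ᵀ := by
      ext i j
      simp [Matrix.conjTranspose_apply, Matrix.transpose_apply]
    rw [hH, Matrix.transpose_mul, hBsym]
    have hassoc : B * (1 - P)ᵀ * ((1 - P) * B) = B * ((1 - P)ᵀ * (1 - P)) * B := by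
      simp only [Matrix.mul_assoc]
    rw [hassoc, hQ, Matrix.mul_sub, Matrix.mul_one, Matrix.sub_mul, hBB]
    congr 1
    rw [← hBB]
    simp only [hPdef, Matrix.transpose_mul, Matrix.transpose_transpose, hBsym,
      Matrix.mul_assoc]
  rw [key]
  exact Matrix.posSemidef_conjTranspose_mul_self _
end

section
/- Let A be an n×n positive semidefinite matrix and let Â be its Nyström approximation with respect to a sketching matrix S (i.e., Â = ASᵀ(SASᵀ)⁻¹SA, with SASᵀ invertible). Suppose ‖A − Â‖ ≤ λ₀ for some λ₀ > 0 (operator norm). Then for any λ ≥ 0, the matrix M = Â + (λ+λ₀)I satisfies A + λI ⪯ M ⪯ A + λI + λ₀I, and consequently the condition number of M^{-1/2}(A+λI)M^{-1/2} is at most 1 + λ₀/(λₙ + λ), where λₙ is the smallest eigenvalue of A and λₙ + λ > 0. -/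
open Matrix

section

open scoped ComplexOrder

/-- The square root of a positive semidefinite matrix, as defined in Mathlib (Dec 2024),
since removed from Mathlib. -/
noncomputable def Matrix.PosSemidef.sqrt {n : Type*} {𝕜 : Type*} [Fintype n] [RCLike 𝕜]
    [DecidableEq n] {A : Matrix n n 𝕜} (hA : A.PosSemidef) : Matrix n n 𝕜 :=
  hA.1.eigenvectorUnitary.1 * diagonal ((↑) ∘ (√·) ∘ hA.1.eigenvalues) *
  (star hA.1.eigenvectorUnitary : Matrix n n 𝕜)

lemma Matrix.PosSemidef.posSemidef_sqrt {n : Type*} {𝕜 : Type*} [Fintype n] [RCLike 𝕜]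
    [DecidableEq n] {A : Matrix n n 𝕜} (hA : A.PosSemidef) : hA.sqrt.PosSemidef := by
  have hD : (diagonal ((RCLike.ofReal : ℝ → 𝕜) ∘ (√·) ∘ hA.1.eigenvalues)).PosSemidef := by
    refine PosSemidef.diagonal fun i => ?_
    simp only [Pi.zero_apply, Function.comp_apply]
    exact RCLike.ofReal_nonneg.mpr (Real.sqrt_nonneg _)
  have key := hD.mul_mul_conjTranspose_same (hA.1.eigenvectorUnitary : Matrix n n 𝕜)
  rw [← star_eq_conjTranspose] at key
  unfold Matrix.PosSemidef.sqrt
  simpa [Unitary.coe_star] using key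

lemma Matrix.PosSemidef.sqrt_mul_self {n : Type*} {𝕜 : Type*} [Fintype n] [RCLike 𝕜]
    [DecidableEq n] {A : Matrix n n 𝕜} (hA : A.PosSemidef) : hA.sqrt * hA.sqrt = A := by
  have hspec := hA.1.spectral_theorem
  rw [Unitary.conjStarAlgAut_apply] at hspec
  have hUU : (star hA.1.eigenvectorUnitary : Matrix n n 𝕜) * hA.1.eigenvectorUnitary.1 = 1 :=
    Unitary.coe_star_mul_self _
  have hDD : diagonal ((RCLike.ofReal : ℝ → 𝕜) ∘ (√·) ∘ hA.1.eigenvalues) *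
      diagonal ((RCLike.ofReal : ℝ → 𝕜) ∘ (√·) ∘ hA.1.eigenvalues)
      = diagonal (RCLike.ofReal ∘ hA.1.eigenvalues) := by
    rw [diagonal_mul_diagonal]
    congr 1
    funext i
    simp only [Function.comp_apply]
    rw [← RCLike.ofReal_mul, Real.mul_self_sqrt (hA.eigenvalues_nonneg i)]
  unfold Matrix.PosSemidef.sqrt
  calc _ = hA.1.eigenvectorUnitary.1 * (diagonal ((RCLike.ofReal : ℝ → 𝕜) ∘ (√·) ∘ hA.1.eigenvalues) *
      ((star hA.1.eigenvectorUnitary : Matrix n n 𝕜) * hA.1.eigenvectorUnitary.1) *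
      diagonal ((RCLike.ofReal : ℝ → 𝕜) ∘ (√·) ∘ hA.1.eigenvalues)) *
      (star hA.1.eigenvectorUnitary : Matrix n n 𝕜) := by simp only [Matrix.mul_assoc]
    _ = A := by rw [hUU, Matrix.mul_one, hDD]; exact hspec.symm

end


variable {n : ℕ}

lemma psd_smul {X : Matrix (Fin n) (Fin n) ℝ} (hX : X.PosSemidef) {c : ℝ} (hc : 0 ≤ c) :
    (c • X).PosSemidef := by
  refine PosSemidef.of_dotProduct_mulVec_nonneg ?_ fun x => ?_
  · unfold Matrix.IsHermitian
    rw [conjTranspose_smul, hX.1]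
    simp
  · rw [smul_mulVec, dotProduct_smul, smul_eq_mul]
    exact mul_nonneg hc (hX.dotProduct_mulVec_nonneg x)

lemma psd_sub_inf_eigen (hn : 0 < n) {A : Matrix (Fin n) (Fin n) ℝ} (hA : A.PosSemidef)
    {lamn : ℝ} (hlamn : lamn = ⨅ i, hA.1.eigenvalues i) :
    (A - lamn • (1 : Matrix (Fin n) (Fin n) ℝ)).PosSemidef := by
  have hU : (hA.1.eigenvectorUnitary : Matrix (Fin n) (Fin n) ℝ) *
      star (hA.1.eigenvectorUnitary : Matrix (Fin n) (Fin n) ℝ) = 1 :=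
    mem_unitaryGroup_iff.mp hA.1.eigenvectorUnitary.2
  have hD : (diagonal (fun i => hA.1.eigenvalues i - lamn)).PosSemidef := by
    refine PosSemidef.diagonal ?_
    intro i
    simp only [Pi.zero_apply, sub_nonneg]
    rw [hlamn]
    exact ciInf_le (Finite.bddBelow_range _) i
  have key := hD.mul_mul_conjTranspose_same (hA.1.eigenvectorUnitary : Matrix (Fin n) (Fin n) ℝ)
  rw [← star_eq_conjTranspose] at key
  have heq : (hA.1.eigenvectorUnitary : Matrix (Fin n) (Fin n) ℝ) *
      diagonal (fun i => hA.1.eigenvalues i - lamn) *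
      star (hA.1.eigenvectorUnitary : Matrix (Fin n) (Fin n) ℝ)
      = A - lamn • (1 : Matrix (Fin n) (Fin n) ℝ) := by
    have hspec := hA.1.spectral_theorem
    rw [Unitary.conjStarAlgAut_apply] at hspec
    have hdg : (diagonal (fun i => hA.1.eigenvalues i - lamn) : Matrix (Fin n) (Fin n) ℝ)
        = diagonal (RCLike.ofReal ∘ hA.1.eigenvalues) - lamn • (1 : Matrix (Fin n) (Fin n) ℝ) := by
      rw [← diagonal_one, ← diagonal_smul, diagonal_sub]
      congr 1
      funext i
      simp
    rw [hdg, mul_sub, sub_mul, ← hspec, mul_smul_comm, smul_mul_assoc, mul_one, hU]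
  rw [heq] at key
  exact key

variable {n : ℕ}

lemma eig_norm_one {N : Matrix (Fin n) (Fin n) ℝ} (hN : N.IsHermitian) (i : Fin n) :
    star (⇑(hN.eigenvectorBasis i)) ⬝ᵥ (⇑(hN.eigenvectorBasis i)) = 1 := by
  have h := hN.eigenvectorBasis.orthonormal.1 i
  have h2 : (inner ℝ (hN.eigenvectorBasis i) (hN.eigenvectorBasis i) : ℝ) = 1 := by
    rw [real_inner_self_eq_norm_sq, h]; norm_num
  rw [EuclideanSpace.inner_eq_star_dotProduct] at h2
  simpa using h2

lemma eig_ge {N : Matrix (Fin n) (Fin n) ℝ} (hN : N.IsHermitian) {c : ℝ}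
    (h : (N - c • (1 : Matrix (Fin n) (Fin n) ℝ)).PosSemidef) (i : Fin n) :
    c ≤ hN.eigenvalues i := by
  have hq := h.dotProduct_mulVec_nonneg (⇑(hN.eigenvectorBasis i))
  rw [sub_mulVec, dotProduct_sub, hN.mulVec_eigenvectorBasis, smul_mulVec, one_mulVec,
    dotProduct_smul, dotProduct_smul, eig_norm_one hN i] at hq
  simp only [smul_eq_mul, mul_one] at hq
  linarith

lemma eig_le {N : Matrix (Fin n) (Fin n) ℝ} (hN : N.IsHermitian) {c : ℝ}
    (h : (c • (1 : Matrix (Fin n) (Fin n) ℝ) - N).PosSemidef) (i : Fin n) :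
    hN.eigenvalues i ≤ c := by
  have hq := h.dotProduct_mulVec_nonneg (⇑(hN.eigenvectorBasis i))
  rw [sub_mulVec, dotProduct_sub, hN.mulVec_eigenvectorBasis, smul_mulVec, one_mulVec,
    dotProduct_smul, dotProduct_smul, eig_norm_one hN i] at hq
  simp only [smul_eq_mul, mul_one] at hq
  linarith

variable {n s : ℕ}

lemma nystrom_psd {A : Matrix (Fin n) (Fin n) ℝ} (hA : A.PosSemidef)
    {S : Matrix (Fin s) (Fin n) ℝ} (hWinv : IsUnit (S * A * Sᵀ)) :
    (A - A * Sᵀ * (S * A * Sᵀ)⁻¹ * S * A).PosSemidef := by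
  set W := S * A * Sᵀ with hWdef
  have hWdet : IsUnit W.det := (isUnit_iff_isUnit_det W).mp hWinv
  have hWW : W⁻¹ * W = 1 := nonsing_inv_mul W hWdet
  set R := hA.sqrt with hRdef
  have hR : R.PosSemidef := hA.posSemidef_sqrt
  have hRR : R * R = A := hA.sqrt_mul_self
  have hRH : Rᴴ = R := hR.1
  have hAH : Aᴴ = A := hA.1
  have hSH : (Sᵀ)ᴴ = S := by ext i j; simp [conjTranspose_apply]
  have hSH' : Sᴴ = Sᵀ := by ext i j; simp [conjTranspose_apply]
  have hWH : Wᴴ = W := by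
    rw [hWdef, conjTranspose_mul, conjTranspose_mul, hSH, hSH', hAH, Matrix.mul_assoc]
  set P := R * Sᵀ * W⁻¹ * S * R with hPdef
  have hPH : Pᴴ = P := by
    rw [hPdef]
    simp only [conjTranspose_mul, hRH, hSH, hSH', conjTranspose_nonsing_inv, hWH]
    simp only [Matrix.mul_assoc]
  have hPP : P * P = P := by
    have h1 : P * P = R * Sᵀ * W⁻¹ * (S * (R * R) * Sᵀ) * W⁻¹ * (S * R) := by
      rw [hPdef]
      simp only [Matrix.mul_assoc]
    rw [h1, hRR, ← hWdef, Matrix.mul_assoc (R * Sᵀ) W⁻¹ W, hWW, Matrix.mul_one, hPdef]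
    simp only [Matrix.mul_assoc]
  have hIP : ((1 : Matrix (Fin n) (Fin n) ℝ) - P).PosSemidef := by
    have h2 : (1 : Matrix (Fin n) (Fin n) ℝ) - P = ((1 : Matrix (Fin n) (Fin n) ℝ) - P)ᴴ *
        ((1 : Matrix (Fin n) (Fin n) ℝ) - P) := by
      rw [conjTranspose_sub, conjTranspose_one, hPH, Matrix.sub_mul, Matrix.mul_sub,
        Matrix.mul_sub, Matrix.one_mul, Matrix.mul_one, hPP]
      rw [Matrix.one_mul]
      abel
    rw [h2]
    exact posSemidef_conjTranspose_mul_self _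
  have key := hIP.mul_mul_conjTranspose_same R
  rw [hRH] at key
  have heq : R * ((1 : Matrix (Fin n) (Fin n) ℝ) - P) * R
      = A - A * Sᵀ * W⁻¹ * S * A := by
    rw [Matrix.mul_sub, Matrix.sub_mul, Matrix.mul_one, hRR, hPdef]
    have h1 : R * (R * Sᵀ * W⁻¹ * S * R) * R = (R * R) * (Sᵀ * W⁻¹ * (S * (R * R))) := by
      simp only [Matrix.mul_assoc]
    rw [h1, hRR]
    simp only [Matrix.mul_assoc]
  rw [heq] at key
  exact key

/-- Let `A` be `n × n` PSD with smallest eigenvalue `lamn`, let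
`Â = A Sᵀ (S A Sᵀ)⁻¹ S A` be its Nyström approximation (so `0 ⪯ Â ⪯ A`), and suppose
`‖A − Â‖ ≤ λ₀`, which for the PSD matrix `A − Â` is equivalent to `A − Â ⪯ λ₀ I`.
Then for `μ ≥ 0` with `lamn + μ > 0`, the preconditioner `M = Â + (μ + λ₀) I` satisfies
`A + μ I ⪯ M ⪯ A + μ I + λ₀ I`, and consequently every ratio of eigenvalues of
`N = M^{-1/2} (A + μ I) M^{-1/2}` (hence its condition number) is at most
`1 + λ₀ / (lamn + μ)`. -/
theorem nystrom_preconditioner_condition_number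
    (n : ℕ) (hn : 0 < n)
    (A : Matrix (Fin n) (Fin n) ℝ) (hA : A.PosSemidef)
    (lamn : ℝ) (hlamn : lamn = ⨅ i, hA.1.eigenvalues i)
    (s : ℕ) (S : Matrix (Fin s) (Fin n) ℝ) (hWinv : IsUnit (S * A * Sᵀ))
    (Ahat : Matrix (Fin n) (Fin n) ℝ) (hAhat : Ahat = A * Sᵀ * (S * A * Sᵀ)⁻¹ * S * A)
    (lam0 : ℝ) (hlam0 : 0 < lam0)
    -- `‖A − Â‖ ≤ λ₀`, encoded as `A − Â ⪯ λ₀ I` (the two are equivalent since `0 ⪯ A − Â`):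
    (hnorm : (lam0 • (1 : Matrix (Fin n) (Fin n) ℝ) - (A - Ahat)).PosSemidef)
    (μ : ℝ) (hμ : 0 ≤ μ) (hpos : 0 < lamn + μ)
    (M : Matrix (Fin n) (Fin n) ℝ)
    (hM : M = Ahat + (μ + lam0) • (1 : Matrix (Fin n) (Fin n) ℝ))
    (hMpd : M.PosDef) :
    ((M - (A + μ • (1 : Matrix (Fin n) (Fin n) ℝ))).PosSemidef ∧
      ((A + μ • (1 : Matrix (Fin n) (Fin n) ℝ) + lam0 • (1 : Matrix (Fin n) (Fin n) ℝ))
        - M).PosSemidef) ∧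
    (∀ (hNh : ((hMpd.posSemidef.sqrt)⁻¹ * (A + μ • (1 : Matrix (Fin n) (Fin n) ℝ))
        * (hMpd.posSemidef.sqrt)⁻¹).IsHermitian) (i j : Fin n),
      hNh.eigenvalues i ≤ (1 + lam0 / (lamn + μ)) * hNh.eigenvalues j) := by
  have hsub : (A - Ahat).PosSemidef := by
    rw [hAhat]; exact nystrom_psd hA hWinv
  have hfirst : (M - (A + μ • (1 : Matrix (Fin n) (Fin n) ℝ))).PosSemidef := by
    have heq : M - (A + μ • (1 : Matrix (Fin n) (Fin n) ℝ))
        = lam0 • (1 : Matrix (Fin n) (Fin n) ℝ) - (A - Ahat) := by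
      rw [hM]; module
    rw [heq]; exact hnorm
  have hsecond : ((A + μ • (1 : Matrix (Fin n) (Fin n) ℝ) + lam0 • (1 : Matrix (Fin n) (Fin n) ℝ))
      - M).PosSemidef := by
    have heq : (A + μ • (1 : Matrix (Fin n) (Fin n) ℝ) + lam0 • (1 : Matrix (Fin n) (Fin n) ℝ))
        - M = A - Ahat := by
      rw [hM]; module
    rw [heq]; exact hsub
  refine ⟨⟨hfirst, hsecond⟩, ?_⟩
  set T := hMpd.posSemidef.sqrt with hTdef
  have hT : T.PosSemidef := hMpd.posSemidef.posSemidef_sqrt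
  have hTT : T * T = M := hMpd.posSemidef.sqrt_mul_self
  have hdet : IsUnit T.det := by
    have : T.det * T.det = M.det := by rw [← det_mul, hTT]
    have hMdet : M.det ≠ 0 := hMpd.det_pos.ne'
    refine isUnit_iff_ne_zero.mpr fun h => hMdet ?_
    rw [← this, h, mul_zero]
  have hQT : T⁻¹ * T = 1 := nonsing_inv_mul T hdet
  have hTQ : T * T⁻¹ = 1 := mul_nonsing_inv T hdet
  have hQH : (T⁻¹)ᴴ = T⁻¹ := by rw [conjTranspose_nonsing_inv, hT.1]
  have hQMQ : T⁻¹ * M * T⁻¹ = 1 := by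
    rw [← hTT, ← Matrix.mul_assoc, Matrix.mul_assoc (T⁻¹ * T) T T⁻¹, hQT, hTQ, Matrix.one_mul]
  set N := T⁻¹ * (A + μ • (1 : Matrix (Fin n) (Fin n) ℝ)) * T⁻¹ with hNdef
  -- upper bound
  have hupper : ((1 : Matrix (Fin n) (Fin n) ℝ) - N).PosSemidef := by
    have key := hfirst.mul_mul_conjTranspose_same T⁻¹
    rw [hQH] at key
    have heq : T⁻¹ * (M - (A + μ • (1 : Matrix (Fin n) (Fin n) ℝ))) * T⁻¹
        = (1 : Matrix (Fin n) (Fin n) ℝ) - N := by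
      rw [Matrix.mul_sub, Matrix.sub_mul, hQMQ, hNdef]
    rw [heq] at key; exact key
  -- lower bound
  set t := lamn + μ with htdef
  have htl : 0 < t + lam0 := by linarith
  set c := t / (t + lam0) with hcdef
  have hc0 : 0 ≤ c := div_nonneg hpos.le htl.le
  have hc1 : 0 ≤ 1 - c := by
    have : c ≤ 1 := by
      rw [hcdef, div_le_one htl]; linarith
    linarith
  have hlowmat : ((A + μ • (1 : Matrix (Fin n) (Fin n) ℝ)) - c • M).PosSemidef := by
    have heq : (A + μ • (1 : Matrix (Fin n) (Fin n) ℝ)) - c • M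
        = (1 - c) • (A - lamn • (1 : Matrix (Fin n) (Fin n) ℝ))
          + c • ((A + μ • (1 : Matrix (Fin n) (Fin n) ℝ) + lam0 • (1 : Matrix (Fin n) (Fin n) ℝ))
            - M) := by
      rw [hcdef, htdef]
      match_scalars <;> field_simp [show lamn + μ + lam0 ≠ 0 by rw [← htdef]; exact htl.ne'] <;> ring
    rw [heq]
    exact (psd_smul (psd_sub_inf_eigen hn hA hlamn) hc1).add (psd_smul hsecond hc0)
  have hlow : (N - c • (1 : Matrix (Fin n) (Fin n) ℝ)).PosSemidef := by
    have key := hlowmat.mul_mul_conjTranspose_same T⁻¹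
    rw [hQH] at key
    have heq : T⁻¹ * ((A + μ • (1 : Matrix (Fin n) (Fin n) ℝ)) - c • M) * T⁻¹
        = N - c • (1 : Matrix (Fin n) (Fin n) ℝ) := by
      rw [Matrix.mul_sub, Matrix.sub_mul, mul_smul_comm, smul_mul_assoc, hQMQ, hNdef]
    rw [heq] at key; exact key
  intro hNh i j
  have hi : hNh.eigenvalues i ≤ 1 := by
    refine eig_le hNh ?_ i
    rw [one_smul]; exact hupper
  have hj : c ≤ hNh.eigenvalues j := eig_ge hNh hlow j
  have hjt : t ≤ hNh.eigenvalues j * (t + lam0) := by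
    rw [hcdef, div_le_iff₀ htl] at hj
    linarith
  have h1c : 1 + lam0 / t = (t + lam0) / t := by
    field_simp
  rw [h1c, div_mul_eq_mul_div, le_div_iff₀ hpos]
  nlinarith
end

section
/- Let λ₁ ≥ λ₂ ≥ ... ≥ λₙ ≥ 0 be a non-increasing sequence of nonnegative reals and let l be an integer with 1 ≤ 2l < n. Then 2λ_{2l+1} + (1/(2l))·∑_{i>2l} λᵢ ≤ (2/l)·∑_{i>l} λᵢ. -/
/-!
Each of the `l` terms `λ_{l+1}, …, λ_{2l}` is at least `λ_{2l+1}`, so `2 λ_{2l+1}` is at most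
`2/l` times their sum; the remaining tail `∑_{i>2l} λᵢ` is nonnegative and its coefficient
`1/(2l)` is below `2/l`.
-/

open Finset

theorem Finset.sum_Ici_eq_sum_Ico_add_sum_Ici {α M : Type*} [LinearOrder α] [LocallyFiniteOrder α]
    [LocallyFiniteOrderTop α] [AddCommMonoid M] {a b : α} (hab : a ≤ b) (f : α → M) :
    ∑ i ∈ Ici a, f i = ∑ i ∈ Ico a b, f i + ∑ i ∈ Ici b, f i := by
  rw [← sum_union (disjoint_left.2 fun i hi hi' => (mem_Ico.1 hi).2.not_ge (mem_Ici.1 hi'))]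
  congr 1
  ext i
  simp only [mem_Ici, mem_union, mem_Ico]
  constructor
  · intro hi
    exact (lt_or_ge i b).imp (⟨hi, ·⟩) id
  · rintro (hi | hi)
    exacts [hi.1, hab.trans hi]

theorem Antitone.card_nsmul_le_sum_Ico {α M : Type*} [Preorder α] [LocallyFiniteOrder α]
    [AddCommMonoid M] [PartialOrder M] [IsOrderedAddMonoid M] {f : α → M} (hf : Antitone f)
    (a b : α) : #(Ico a b) • f b ≤ ∑ i ∈ Ico a b, f i :=
  card_nsmul_le_sum _ _ _ fun _ hi => hf (mem_Ico.1 hi).2.le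

theorem Fin.filter_le_val_eq_Ici {n k : ℕ} (hk : k < n) :
    univ.filter (fun i : Fin n => k ≤ (i : ℕ)) = Ici ⟨k, hk⟩ := by
  ext i
  simp [Fin.le_def]

theorem two_mul_add_one_div_mul_le {l x S T : ℝ} (hl : 0 < l) (hx : l * x ≤ S) (hT : 0 ≤ T) :
    2 * x + 1 / (2 * l) * T ≤ 2 / l * (S + T) := by
  have hwindow : 2 * x ≤ 2 / l * S := by
    rw [div_mul_eq_mul_div, le_div_iff₀ hl]
    linarith
  have htail : 1 / (2 * l) * T ≤ 2 / l * T := by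
    gcongr ?_ * T
    rw [div_le_div_iff₀ (by positivity) hl]
    linarith
  linarith

/-- For a non-increasing sequence `lam 0 ≥ lam 1 ≥ ... ≥ lam (n-1) ≥ 0`
(1-based `λ₁ ≥ ... ≥ λₙ`) and an integer `l` with `1 ≤ 2l < n`:
`2 λ_{2l+1} + (1/(2l)) ∑_{i>2l} λᵢ ≤ (2/l) ∑_{i>l} λᵢ`
(1-based index `i > k` corresponds to 0-based index `i ≥ k`). -/
theorem tail_sum_doubling_bound
    (n : ℕ) (lam : Fin n → ℝ) (hmono : Antitone lam) (hnn : ∀ i, 0 ≤ lam i)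
    (l : ℕ) (hl : 1 ≤ l) (hln : 2 * l < n) :
    2 * lam ⟨2 * l, hln⟩
        + (1 / (2 * l : ℝ)) * ∑ i ∈ univ.filter (fun i : Fin n => 2 * l ≤ (i : ℕ)), lam i
      ≤ (2 / (l : ℝ)) * ∑ i ∈ univ.filter (fun i : Fin n => l ≤ (i : ℕ)), lam i := by
  have hla : l < n := by omega
  have hab : (⟨l, hla⟩ : Fin n) ≤ ⟨2 * l, hln⟩ := Fin.le_def.2 (by simp only; omega)
  rw [Fin.filter_le_val_eq_Ici hln, Fin.filter_le_val_eq_Ici hla,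
    sum_Ici_eq_sum_Ico_add_sum_Ici hab]
  have hwindow : (l : ℝ) * lam ⟨2 * l, hln⟩ ≤ ∑ i ∈ Ico ⟨l, hla⟩ ⟨2 * l, hln⟩, lam i := by
    have h := hmono.card_nsmul_le_sum_Ico ⟨l, hla⟩ ⟨2 * l, hln⟩
    rwa [Fin.card_Ico, nsmul_eq_mul, show 2 * l - l = l by omega] at h
  exact two_mul_add_one_div_mul_le (by exact_mod_cast hl) hwindow
    (sum_nonneg fun i _ => hnn i)
end

section
/- Let A be an m×n real matrix with singular values σ₁ ≥ ... ≥ σₙ, let l < n be a positive integer, and set λ̃ ≥ (2/l)·∑_{i>l} σᵢ². Then the effective dimension d_{λ̃} = ∑_{i=1}^n σᵢ²/(σᵢ² + λ̃) of AAᵀ satisfies d_{λ̃} ≤ (3/2)·l. -/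
open Finset

/-- Let `σ 0 ≥ ... ≥ σ (n-1) ≥ 0` be the singular values of a matrix `A`
(as an antitone nonnegative sequence), let `0 < l < n`, and let
`λ̃ ≥ (2/l) ∑_{i>l} σᵢ²`.  Then the effective dimension
`d = ∑ i, σᵢ² / (σᵢ² + λ̃)` of `A Aᵀ` satisfies `d ≤ (3/2) l`. -/
theorem effective_dimension_le_three_halves_l
    (n : ℕ) (σ : Fin n → ℝ) (hmono : Antitone σ) (hnn : ∀ i, 0 ≤ σ i)
    (l : ℕ) (hl : 0 < l) (hln : l < n)
    (lam : ℝ)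
    (hlam : (2 / (l : ℝ)) * ∑ i ∈ univ.filter (fun i : Fin n => l ≤ (i : ℕ)), (σ i) ^ 2 ≤ lam) :
    ∑ i, (σ i) ^ 2 / ((σ i) ^ 2 + lam) ≤ (3 / 2 : ℝ) * l := by
  set S := ∑ i ∈ univ.filter (fun i : Fin n => l ≤ (i : ℕ)), (σ i) ^ 2 with hSdef
  have hS : 0 ≤ S := Finset.sum_nonneg fun i _ => sq_nonneg _
  have hlpos : (0:ℝ) < l := by exact_mod_cast hl
  have hlam0 : 0 ≤ lam := le_trans (mul_nonneg (by positivity) hS) hlam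
  have hsplit : (univ : Finset (Fin n)) =
      univ.filter (fun i : Fin n => (i:ℕ) < l) ∪ univ.filter (fun i : Fin n => l ≤ (i:ℕ)) := by
    ext i
    simp [Nat.lt_or_ge]
  have hdisj : Disjoint (univ.filter (fun i : Fin n => (i:ℕ) < l))
      (univ.filter (fun i : Fin n => l ≤ (i:ℕ))) := by
    rw [Finset.disjoint_left]
    intro i hi hj
    simp only [Finset.mem_filter] at hi hj
    omega
  rw [hsplit, Finset.sum_union hdisj]
  -- head bound
  have hcard : ((univ.filter (fun i : Fin n => (i:ℕ) < l)).card : ℝ) ≤ l := by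
    have h : (univ.filter (fun i : Fin n => (i:ℕ) < l)).card ≤ (Finset.range l).card := by
      apply Finset.card_le_card_of_injOn (fun i : Fin n => (i:ℕ))
      · intro i hi
        simp only [Finset.mem_coe, Finset.mem_filter] at hi
        simpa using hi.2
      · intro i _ j _ hij
        exact Fin.ext hij
    simpa using (Nat.cast_le.mpr h : ((univ.filter (fun i : Fin n => (i:ℕ) < l)).card : ℝ) ≤ (Finset.range l).card)
  have hhead : ∑ i ∈ univ.filter (fun i : Fin n => (i:ℕ) < l),
      (σ i) ^ 2 / ((σ i) ^ 2 + lam) ≤ (l : ℝ) := by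
    calc ∑ i ∈ univ.filter (fun i : Fin n => (i:ℕ) < l), (σ i) ^ 2 / ((σ i) ^ 2 + lam)
        ≤ ∑ i ∈ univ.filter (fun i : Fin n => (i:ℕ) < l), (1:ℝ) := by
          apply Finset.sum_le_sum
          intro i _
          apply div_le_one_of_le₀
          · linarith [sq_nonneg (σ i)]
          · positivity
      _ = ((univ.filter (fun i : Fin n => (i:ℕ) < l)).card : ℝ) := by simp
      _ ≤ l := hcard
  -- tail bound
  have htail : ∑ i ∈ univ.filter (fun i : Fin n => l ≤ (i:ℕ)),
      (σ i) ^ 2 / ((σ i) ^ 2 + lam) ≤ (l : ℝ) / 2 := by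
    rcases eq_or_lt_of_le hlam0 with h0 | hpos
    · -- lam = 0
      have hS0 : S = 0 := by
        have h1 : 2 / (l:ℝ) * S ≤ 0 := by rw [← h0] at hlam; exact hlam
        have h2 : (0:ℝ) < 2 / l := by positivity
        nlinarith
      have hz : ∀ i ∈ univ.filter (fun i : Fin n => l ≤ (i:ℕ)), (σ i) ^ 2 = 0 := by
        rw [hSdef] at hS0
        exact (Finset.sum_eq_zero_iff_of_nonneg fun i _ => sq_nonneg _).mp hS0
      have : ∑ i ∈ univ.filter (fun i : Fin n => l ≤ (i:ℕ)),
          (σ i) ^ 2 / ((σ i) ^ 2 + lam) = 0 := by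
        apply Finset.sum_eq_zero
        intro i hi
        rw [hz i hi]
        simp
      rw [this]
      positivity
    · -- 0 < lam
      have step1 : ∑ i ∈ univ.filter (fun i : Fin n => l ≤ (i:ℕ)),
          (σ i) ^ 2 / ((σ i) ^ 2 + lam) ≤ S / lam := by
        rw [hSdef, Finset.sum_div]
        apply Finset.sum_le_sum
        intro i _
        apply div_le_div_of_nonneg_left (sq_nonneg _) hpos
        linarith [sq_nonneg (σ i)]
      have hSle : S ≤ lam * l / 2 := by
        have h2 : 2 / (l:ℝ) * S ≤ lam := hlam
        have h3 : 2 * S ≤ lam * l := by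
          have := mul_le_mul_of_nonneg_right h2 hlpos.le
          calc 2 * S = 2 / (l:ℝ) * S * l := by field_simp
            _ ≤ lam * l := this
        linarith
      calc ∑ i ∈ univ.filter (fun i : Fin n => l ≤ (i:ℕ)), (σ i) ^ 2 / ((σ i) ^ 2 + lam)
          ≤ S / lam := step1
        _ ≤ (lam * l / 2) / lam := by gcongr
        _ = (l:ℝ) / 2 := by field_simp
  linarith
end
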